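/- Let n ≥ 3 and let k ≥ 1 be an integer with 2k + 1 ≤ n − 1. If κ ∈ Γ satisfies κ_i > 0 for all i and Ñ_k(κ) = p_1(κ) · L̃_k(κ), then κ_i ≥ 1 for all i. -/

import Mathlib

/-- The `k`-th elementary symmetric polynomial of `x : Fin m → ℝ`. -/
noncomputable def esymm {m : ℕ} (k : ℕ) (x : Fin m → ℝ) : ℝ :=
  ∑ s ∈ Finset.univ.powersetCard k, ∏ i ∈ s, x i

/-- The normalized `k`-th elementary symmetric function `p_k = σ_k / C(m,k)`. -/
noncomputable def pnorm {m : ℕ} (k : ℕ) (x : Fin m → ℝ) : ℝ :=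
  esymm k x / (m.choose k : ℝ)

/-- `L̃_k(λ) = Σ_{i=0}^k (−1)^i C(k,i) p_{2k−2i}(λ)`. -/
noncomputable def Ltilde {m : ℕ} (k : ℕ) (x : Fin m → ℝ) : ℝ :=
  ∑ i ∈ Finset.range (k + 1), (-1 : ℝ) ^ i * (k.choose i : ℝ) * pnorm (2 * k - 2 * i) x

/-- `Ñ_k(λ) = Σ_{i=0}^k (−1)^i C(k,i) p_{2k+1−2i}(λ)`. -/
noncomputable def Ntilde {m : ℕ} (k : ℕ) (x : Fin m → ℝ) : ℝ :=
  ∑ i ∈ Finset.range (k + 1), (-1 : ℝ) ^ i * (k.choose i : ℝ) * pnorm (2 * k + 1 - 2 * i) x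

/-!
Write `p_r(A)` for the normalized elementary symmetric functions of the entries `x i`, `i ∈ A`;
then `L̃_k` and `Ñ_k` are the `k`-th forward differences of `u ↦ p_{2u}` and `u ↦ p_{2u+1}` at `0`.
Summing `p_r(A ∖ {i, l})` against `x_i x_l - 1` and against `(x_i - x_l)²` over the ordered pairs
`i ≠ l` of `A` expresses the result through `p_1(A)`, `p_r(A)`, `p_{r+1}(A)` and `p_{r+2}(A)`;
taking differences turns this into
  `|A| (|A| - 1) Ñ_{j+1}(A) = ∑_{i ≠ l} (x_i x_l - 1) Ñ_j(A ∖ {i, l})`,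
  `(j + 1) ∑_{i ≠ l} (x_i - x_l)² Ñ_j(A ∖ {i, l}) = |A|² (|A| - 1) (p_1 L̃_{j+1} - Ñ_{j+1})(A)`.
By the first, `Ñ_j ≥ 0` on `Γ`, and `Ñ_j > 0` when all entries exceed `1`. If
`Ñ_{j+1} = p_1 L̃_{j+1}` and `κ_{i₀} < 1`, then `Γ` forces `κ_l > 1` for all `l ≠ i₀`, so the
left-hand side of the second identity is positive while its right-hand side vanishes.
-/

open Finset
open scoped fwdDiff

noncomputable def esymmOn {ι : Type*} (x : ι → ℝ) (r : ℕ) (A : Finset ι) : ℝ :=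
  ∑ s ∈ A.powersetCard r, ∏ i ∈ s, x i

noncomputable def pnormOn {ι : Type*} (x : ι → ℝ) (r : ℕ) (A : Finset ι) : ℝ :=
  esymmOn x r A / ((#A).choose r : ℝ)

noncomputable def LtildeOn {ι : Type*} (x : ι → ℝ) (j : ℕ) (A : Finset ι) : ℝ :=
  (Δ_[1])^[j] (fun u => pnormOn x (2 * u) A) 0

noncomputable def NtildeOn {ι : Type*} (x : ι → ℝ) (j : ℕ) (A : Finset ι) : ℝ :=
  (Δ_[1])^[j] (fun u => pnormOn x (2 * u + 1) A) 0

lemma fwdDiff_iter_eq_sum (f : ℕ → ℝ) (j : ℕ) :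
    (Δ_[1])^[j] f 0 = ∑ u ∈ range (j + 1), (-1 : ℝ) ^ (j - u) * j.choose u * f u := by
  simp [fwdDiff_iter_eq_sum_shift, zsmul_eq_mul]

lemma fwdDiff_iter_eq_sum_reflect (f : ℕ → ℝ) (j : ℕ) :
    (Δ_[1])^[j] f 0 = ∑ i ∈ range (j + 1), (-1 : ℝ) ^ i * j.choose i * f (j - i) := by
  rw [fwdDiff_iter_eq_sum, ← sum_range_reflect]
  refine sum_congr rfl fun i hi => ?_
  have hi : i ≤ j := Nat.lt_succ_iff.mp (mem_range.mp hi)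
  rw [Nat.add_sub_cancel, Nat.sub_sub_self hi, Nat.choose_symm hi]

lemma fwdDiff_iter_congr {f g : ℕ → ℝ} {j : ℕ} (h : ∀ u ≤ j, f u = g u) :
    (Δ_[1])^[j] f 0 = (Δ_[1])^[j] g 0 := by
  simp only [fwdDiff_iter_eq_sum]
  exact sum_congr rfl fun u hu => by rw [h u (Nat.lt_succ_iff.mp (mem_range.mp hu))]

lemma fwdDiff_iter_succ_natCast_mul (g : ℕ → ℝ) (j : ℕ) :
    (Δ_[1])^[j + 1] (fun s : ℕ => (s : ℝ) * g (s - 1)) 0 = (j + 1) * (Δ_[1])^[j] g 0 := by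
  rw [fwdDiff_iter_eq_sum, fwdDiff_iter_eq_sum, sum_range_succ', mul_sum]
  simp only [Nat.cast_zero, zero_mul, mul_zero, add_zero, Nat.add_sub_cancel,
    Nat.add_sub_add_right]
  refine sum_congr rfl fun u _ => ?_
  have h : ((j + 1 : ℕ) : ℝ) * j.choose u = (j + 1).choose (u + 1) * (u + 1 : ℕ) := by
    exact_mod_cast Nat.add_one_mul_choose_eq j u
  push_cast at h ⊢
  linear_combination (-1 : ℝ) ^ (j - u) * g u * h.symm

lemma sum_sum_mul_fwdDiff_iter {α β : Type*} (s : Finset α) (t : α → Finset β)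
    (w : α → β → ℝ) (g : α → β → ℕ → ℝ) (j : ℕ) :
    ∑ a ∈ s, ∑ b ∈ t a, w a b * (Δ_[1])^[j] (g a b) 0
      = (Δ_[1])^[j] (fun u => ∑ a ∈ s, ∑ b ∈ t a, w a b * g a b u) 0 := by
  have h : (fun u => ∑ a ∈ s, ∑ b ∈ t a, w a b * g a b u) = ∑ a ∈ s, ∑ b ∈ t a, w a b • g a b := by
    ext u; simp [Finset.sum_apply]
  simp [h, fwdDiff_iter_finsetSum, fwdDiff_iter_const_smul, Finset.sum_apply]

section

variable {ι : Type*} (x : ι → ℝ) (A : Finset ι)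

@[simp] lemma esymmOn_zero : esymmOn x 0 A = 1 := by
  simp [esymmOn]

lemma esymmOn_one : esymmOn x 1 A = ∑ i ∈ A, x i := by
  simp [esymmOn, powersetCard_one]

@[simp] lemma pnormOn_zero : pnormOn x 0 A = 1 := by
  simp [pnormOn]

lemma NtildeOn_zero : NtildeOn x 0 A = (∑ i ∈ A, x i) / #A := by
  simp [NtildeOn, pnormOn, esymmOn_one]

end

section

variable {ι : Type*} [DecidableEq ι] (x : ι → ℝ)

lemma esymmOn_insert {a : ι} {A : Finset ι} (ha : a ∉ A) (r : ℕ) :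
    esymmOn x (r + 1) (insert a A) = esymmOn x (r + 1) A + x a * esymmOn x r A := by
  have hnot : ∀ s ∈ A.powersetCard r, a ∉ s := fun s hs h => ha ((mem_powersetCard.mp hs).1 h)
  rw [esymmOn, powersetCard_succ_insert ha, sum_union, sum_image, esymmOn, esymmOn, mul_sum]
  · exact congrArg _ (sum_congr rfl fun s hs => prod_insert (hnot s hs))
  · intro s hs t ht hst
    rw [← erase_insert (hnot s hs), ← erase_insert (hnot t ht), hst]
  · refine disjoint_left.mpr fun s hs hs' => ?_
    obtain ⟨t, -, rfl⟩ := mem_image.mp hs'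
    exact ha ((mem_powersetCard.mp hs).1 (mem_insert_self a t))

lemma esymmOn_succ_of_mem {a : ι} {A : Finset ι} (ha : a ∈ A) (r : ℕ) :
    esymmOn x (r + 1) A = esymmOn x (r + 1) (A.erase a) + x a * esymmOn x r (A.erase a) := by
  conv_lhs => rw [← insert_erase ha]
  exact esymmOn_insert x (notMem_erase a A) r

lemma sum_mul_esymmOn_erase (A : Finset ι) (r : ℕ) :
    ∑ i ∈ A, x i * esymmOn x r (A.erase i) = (r + 1) * esymmOn x (r + 1) A := by
  induction A using Finset.induction_on generalizing r with
  | empty => simp [esymmOn, powersetCard_eq_empty.mpr (by simp : #(∅ : Finset ι) < r + 1)]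
  | @insert a B ha ih =>
    have herase : ∀ i ∈ B, (insert a B).erase i = insert a (B.erase i) := fun i hi =>
      erase_insert_of_ne fun h => ha (h ▸ hi)
    rw [sum_insert ha, erase_insert ha, esymmOn_insert x ha]
    cases r with
    | zero =>
      simp only [esymmOn_zero, mul_one, CharP.cast_eq_zero, zero_add, esymmOn_one, one_mul]
      ring
    | succ r =>
      rw [sum_congr rfl fun i hi => by
        rw [herase i hi, esymmOn_insert x fun h => ha (mem_of_mem_erase h)]]
      simp only [mul_add, sum_add_distrib, ih (r + 1), mul_left_comm (x _) (x a), ← mul_sum, ih r]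
      push_cast
      ring

lemma sum_esymmOn_erase (A : Finset ι) (r : ℕ) :
    ∑ i ∈ A, esymmOn x r (A.erase i) = (#A - r) * esymmOn x r A := by
  cases r with
  | zero => simp
  | succ r =>
    rw [sum_congr rfl fun i hi => eq_sub_of_add_eq (esymmOn_succ_of_mem x hi r).symm,
      sum_sub_distrib, sum_const, sum_mul_esymmOn_erase, nsmul_eq_mul]
    push_cast
    ring

lemma sum_sq_mul_esymmOn_erase (A : Finset ι) (r : ℕ) :
    ∑ i ∈ A, x i ^ 2 * esymmOn x r (A.erase i)
      = esymmOn x 1 A * esymmOn x (r + 1) A - (r + 2) * esymmOn x (r + 2) A := by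
  have h : ∀ i ∈ A, x i ^ 2 * esymmOn x r (A.erase i)
      = x i * esymmOn x (r + 1) A - x i * esymmOn x (r + 1) (A.erase i) := fun i hi => by
    rw [esymmOn_succ_of_mem x hi r]; ring
  rw [sum_congr rfl h, sum_sub_distrib, ← sum_mul, sum_mul_esymmOn_erase, esymmOn_one]
  push_cast
  ring

end

section

variable {ι : Type*} [DecidableEq ι] (x : ι → ℝ) (A : Finset ι) (r : ℕ)

lemma sum_sum_erase_comm (f : ι → ι → ℝ) :
    ∑ i ∈ A, ∑ l ∈ A.erase i, f i l = ∑ i ∈ A, ∑ l ∈ A.erase i, f l i := by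
  have h : ∀ g : ι → ι → ℝ,
      ∑ i ∈ A, ∑ l ∈ A.erase i, g i l = ∑ i ∈ A, ∑ l ∈ A, g i l - ∑ i ∈ A, g i i := fun g => by
    rw [← sum_sub_distrib]
    exact sum_congr rfl fun i hi => sum_erase_eq_sub hi
  rw [h, h, sum_comm (f := fun i l => f l i)]

lemma sum_sum_mul_mul_esymmOn :
    ∑ i ∈ A, ∑ l ∈ A.erase i, x i * x l * esymmOn x r ((A.erase i).erase l)
      = (r + 1) * (r + 2) * esymmOn x (r + 2) A := by
  simp_rw [mul_assoc, ← mul_sum, sum_mul_esymmOn_erase, mul_left_comm (x _), ← mul_sum,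
    sum_mul_esymmOn_erase]
  push_cast
  ring

lemma sum_sum_esymmOn :
    ∑ i ∈ A, ∑ l ∈ A.erase i, esymmOn x r ((A.erase i).erase l)
      = (#A - 1 - r) * (#A - r) * esymmOn x r A := by
  rw [sum_congr rfl fun i hi => by rw [sum_esymmOn_erase, cast_card_erase_of_mem hi],
    ← mul_sum, sum_esymmOn_erase]
  ring

lemma sum_sum_sq_mul_esymmOn :
    ∑ i ∈ A, ∑ l ∈ A.erase i, x i ^ 2 * esymmOn x r ((A.erase i).erase l)
      = (#A - 1 - r) * (esymmOn x 1 A * esymmOn x (r + 1) A - (r + 2) * esymmOn x (r + 2) A) := by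
  rw [sum_congr rfl fun i hi => by
      rw [← mul_sum, sum_esymmOn_erase, cast_card_erase_of_mem hi, mul_left_comm],
    ← mul_sum, sum_sq_mul_esymmOn_erase]

lemma sum_sum_mul_sub_one_mul_esymmOn :
    ∑ i ∈ A, ∑ l ∈ A.erase i, (x i * x l - 1) * esymmOn x r ((A.erase i).erase l)
      = (r + 1) * (r + 2) * esymmOn x (r + 2) A - (#A - 1 - r) * (#A - r) * esymmOn x r A := by
  rw [← sum_sum_mul_mul_esymmOn, ← sum_sum_esymmOn, ← sum_sub_distrib]
  refine sum_congr rfl fun i _ => ?_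
  rw [← sum_sub_distrib]
  exact sum_congr rfl fun l _ => by ring

lemma sum_sum_sub_sq_mul_esymmOn :
    ∑ i ∈ A, ∑ l ∈ A.erase i, (x i - x l) ^ 2 * esymmOn x r ((A.erase i).erase l)
      = 2 * (#A - 1 - r) * esymmOn x 1 A * esymmOn x (r + 1) A
        - 2 * #A * (r + 2) * esymmOn x (r + 2) A := by
  have hswap : ∑ i ∈ A, ∑ l ∈ A.erase i, x l ^ 2 * esymmOn x r ((A.erase i).erase l)
      = ∑ i ∈ A, ∑ l ∈ A.erase i, x i ^ 2 * esymmOn x r ((A.erase i).erase l) := by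
    rw [sum_sum_erase_comm A fun i l => x l ^ 2 * esymmOn x r ((A.erase i).erase l)]
    simp_rw [erase_right_comm]
  have hexp : ∀ i l, (x i - x l) ^ 2 * esymmOn x r ((A.erase i).erase l)
      = x i ^ 2 * esymmOn x r ((A.erase i).erase l) + x l ^ 2 * esymmOn x r ((A.erase i).erase l)
        - 2 * (x i * x l * esymmOn x r ((A.erase i).erase l)) := fun i l => by ring
  simp only [hexp, sum_sub_distrib, sum_add_distrib]
  rw [hswap, sum_sum_sq_mul_esymmOn]
  simp only [← mul_sum]
  rw [sum_sum_mul_mul_esymmOn]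
  ring

end

lemma choose_add_two_mul (r s : ℕ) :
    ((r + s + 2).choose (r + 2) : ℝ) * ((r + 1) * (r + 2))
      = (r + s + 2) * (r + s + 1) * (r + s).choose r := by
  have h₁ : ((r + s + 2 : ℕ) : ℝ) * (r + s + 1).choose (r + 1)
      = (r + s + 2).choose (r + 2) * (r + 2 : ℕ) := by
    exact_mod_cast Nat.add_one_mul_choose_eq (r + s + 1) (r + 1)
  have h₂ : ((r + s + 1 : ℕ) : ℝ) * (r + s).choose r
      = (r + s + 1).choose (r + 1) * (r + 1 : ℕ) := by
    exact_mod_cast Nat.add_one_mul_choose_eq (r + s) r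
  push_cast at h₁ h₂
  linear_combination (-(r + 1 : ℝ)) * h₁ - (r + s + 2 : ℝ) * h₂

lemma choose_mul_add_two (r s : ℕ) :
    ((r + s + 2).choose r : ℝ) * ((s + 1) * (s + 2))
      = (r + s + 2) * (r + s + 1) * (r + s).choose r := by
  have h := choose_add_two_mul s r
  rw [show s + r + 2 = r + (s + 2) by ring, ← Nat.choose_symm_add, add_comm s r,
    ← Nat.choose_symm_add] at h
  linear_combination h

lemma choose_add_one_mul (r s : ℕ) :
    ((r + s + 2).choose (r + 1) : ℝ) * ((r + 1) * (s + 1))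
      = (r + s + 2) * (r + s + 1) * (r + s).choose r := by
  have h₁ : ((r + s + 2 : ℕ) : ℝ) * (r + s + 1).choose r
      = (r + s + 2).choose (r + 1) * (r + 1 : ℕ) := by
    exact_mod_cast Nat.add_one_mul_choose_eq (r + s + 1) r
  have h₂ : ((r + s + 1 : ℕ) : ℝ) * (r + s).choose s
      = (r + s + 1).choose (s + 1) * (s + 1 : ℕ) := by
    exact_mod_cast Nat.add_one_mul_choose_eq (r + s) s
  rw [show r + s + 1 = r + (s + 1) by ring, ← Nat.choose_symm_add, ← Nat.choose_symm_add] at h₂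
  push_cast at h₁ h₂
  linear_combination (-(s + 1 : ℝ)) * h₁ - (r + s + 2 : ℝ) * h₂

lemma natCast_mul_sub_one_pos {m : ℕ} (hm : 2 ≤ m) : (0 : ℝ) < m * (m - 1) := by
  have : (2 : ℝ) ≤ m := by exact_mod_cast hm
  nlinarith

section

variable {ι : Type*} [DecidableEq ι] (x : ι → ℝ) {A : Finset ι} {r : ℕ}

lemma card_erase_erase {i l : ι} (hi : i ∈ A) (hl : l ∈ A.erase i) :
    #((A.erase i).erase l) = #A - 2 := by
  rw [card_erase_of_mem hl, card_erase_of_mem hi, Nat.sub_sub]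

lemma sum_sum_mul_pnormOn_erase_erase (w : ι → ι → ℝ) :
    ∑ i ∈ A, ∑ l ∈ A.erase i, w i l * pnormOn x r ((A.erase i).erase l)
      = (∑ i ∈ A, ∑ l ∈ A.erase i, w i l * esymmOn x r ((A.erase i).erase l))
        / (#A - 2).choose r := by
  rw [sum_div]
  refine sum_congr rfl fun i hi => ?_
  rw [sum_div]
  refine sum_congr rfl fun l hl => ?_
  rw [pnormOn, card_erase_erase hi hl, mul_div_assoc]

lemma sum_sum_mul_sub_one_mul_pnormOn (hr : r + 2 ≤ #A) :
    ∑ i ∈ A, ∑ l ∈ A.erase i, (x i * x l - 1) * pnormOn x r ((A.erase i).erase l)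
      = #A * (#A - 1) * (pnormOn x (r + 2) A - pnormOn x r A) := by
  obtain ⟨s, hs⟩ : ∃ s, #A = r + s + 2 := ⟨#A - r - 2, by omega⟩
  rw [sum_sum_mul_pnormOn_erase_erase x, sum_sum_mul_sub_one_mul_esymmOn, pnormOn, pnormOn, hs,
    show r + s + 2 - 2 = r + s by omega]
  have h₁ := choose_add_two_mul r s
  have h₂ := choose_mul_add_two r s
  have hchoose : ∀ k ≤ r + s + 2, ((r + s + 2).choose k : ℝ) ≠ 0 := fun k hk =>
    Nat.cast_ne_zero.mpr (Nat.choose_pos hk).ne'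
  have h₀ : ((r + s).choose r : ℝ) ≠ 0 := Nat.cast_ne_zero.mpr (Nat.choose_pos (by omega)).ne'
  field_simp [hchoose (r + 2) (by omega), hchoose r (by omega)]
  push_cast
  linear_combination (esymmOn x (r + 2) A * ((r + s + 2).choose r : ℝ)) * h₁
    - (esymmOn x r A * ((r + s + 2).choose (r + 2) : ℝ)) * h₂

lemma sum_sum_sub_sq_mul_pnormOn (hr : r + 2 ≤ #A) :
    (r + 1) * ∑ i ∈ A, ∑ l ∈ A.erase i, (x i - x l) ^ 2 * pnormOn x r ((A.erase i).erase l)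
      = 2 * #A ^ 2 * (#A - 1) * (pnormOn x 1 A * pnormOn x (r + 1) A - pnormOn x (r + 2) A) := by
  obtain ⟨s, hs⟩ : ∃ s, #A = r + s + 2 := ⟨#A - r - 2, by omega⟩
  rw [sum_sum_mul_pnormOn_erase_erase x, sum_sum_sub_sq_mul_esymmOn, pnormOn, pnormOn, pnormOn, hs,
    show r + s + 2 - 2 = r + s by omega, Nat.choose_one_right]
  have h₁ := choose_add_two_mul r s
  have h₂ := choose_add_one_mul r s
  have hchoose : ∀ k ≤ r + s + 2, ((r + s + 2).choose k : ℝ) ≠ 0 := fun k hk =>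
    Nat.cast_ne_zero.mpr (Nat.choose_pos hk).ne'
  have h₀ : ((r + s).choose r : ℝ) ≠ 0 := Nat.cast_ne_zero.mpr (Nat.choose_pos (by omega)).ne'
  field_simp [hchoose (r + 2) (by omega), hchoose (r + 1) (by omega)]
  push_cast
  linear_combination (esymmOn x 1 A * esymmOn x (r + 1) A * ((r + s + 2).choose (r + 2) : ℝ)) * h₂
    - ((r + s + 2 : ℝ) * esymmOn x (r + 2) A * ((r + s + 2).choose (r + 1) : ℝ)) * h₁

end

section

variable {ι : Type*} [DecidableEq ι] (x : ι → ℝ) {A : Finset ι} {j : ℕ}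

lemma NtildeOn_succ (hA : 2 * j + 3 ≤ #A) :
    #A * (#A - 1) * NtildeOn x (j + 1) A
      = ∑ i ∈ A, ∑ l ∈ A.erase i, (x i * x l - 1) * NtildeOn x j ((A.erase i).erase l) := by
  simp only [NtildeOn]
  rw [sum_sum_mul_fwdDiff_iter A A.erase (fun i l => x i * x l - 1)
      (fun i l u => pnormOn x (2 * u + 1) ((A.erase i).erase l)),
    fwdDiff_iter_congr fun u hu => sum_sum_mul_sub_one_mul_pnormOn x (by omega),
    Function.iterate_succ_apply, fwdDiff_iter_eq_sum, fwdDiff_iter_eq_sum, mul_sum]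
  refine sum_congr rfl fun u _ => ?_
  rw [fwdDiff, show 2 * (u + 1) + 1 = 2 * u + 1 + 2 by ring]
  ring

lemma sum_sum_sub_sq_mul_NtildeOn (hA : 2 * j + 3 ≤ #A) :
    (j + 1) * ∑ i ∈ A, ∑ l ∈ A.erase i, (x i - x l) ^ 2 * NtildeOn x j ((A.erase i).erase l)
      = #A ^ 2 * (#A - 1) * (pnormOn x 1 A * LtildeOn x (j + 1) A - NtildeOn x (j + 1) A) := by
  set G : ℕ → ℝ := fun u =>
    ∑ i ∈ A, ∑ l ∈ A.erase i, (x i - x l) ^ 2 * pnormOn x (2 * u + 1) ((A.erase i).erase l)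
  have hG : ∀ s ≤ j + 1, (s : ℝ) * G (s - 1)
      = #A ^ 2 * (#A - 1) * (pnormOn x 1 A * pnormOn x (2 * s) A - pnormOn x (2 * s + 1) A) := by
    rintro (_ | u) hu
    · simp
    · have h := sum_sum_sub_sq_mul_pnormOn x (r := 2 * u + 1) (A := A) (by omega)
      simp only [G, Nat.add_sub_cancel]
      push_cast at h ⊢
      linear_combination h / 2
  calc (j + 1) * ∑ i ∈ A, ∑ l ∈ A.erase i, (x i - x l) ^ 2 * NtildeOn x j ((A.erase i).erase l)
      = (j + 1) * (Δ_[1])^[j] G 0 := by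
        simp only [NtildeOn]
        rw [sum_sum_mul_fwdDiff_iter]
    _ = (Δ_[1])^[j + 1] (fun s : ℕ => (s : ℝ) * G (s - 1)) 0 :=
        (fwdDiff_iter_succ_natCast_mul G j).symm
    _ = _ := by
        rw [fwdDiff_iter_congr hG, LtildeOn, NtildeOn, fwdDiff_iter_eq_sum, fwdDiff_iter_eq_sum,
          fwdDiff_iter_eq_sum, mul_sum, ← sum_sub_distrib, mul_sum]
        exact sum_congr rfl fun s _ => by ring

lemma NtildeOn_nonneg (hx : ∀ i ∈ A, 0 ≤ x i)
    (hΓ : ∀ i ∈ A, ∀ l ∈ A, i ≠ l → 1 ≤ x i * x l) (hA : 2 * j + 1 ≤ #A) :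
    0 ≤ NtildeOn x j A := by
  induction j generalizing A with
  | zero => exact NtildeOn_zero x A ▸ div_nonneg (sum_nonneg hx) (Nat.cast_nonneg _)
  | succ j ih =>
    refine (mul_nonneg_iff_of_pos_left (natCast_mul_sub_one_pos (m := #A) (by omega))).mp ?_
    rw [NtildeOn_succ x (by omega)]
    refine sum_nonneg fun i hi => sum_nonneg fun l hl => mul_nonneg ?_ ?_
    · exact sub_nonneg.mpr (hΓ i hi l (mem_of_mem_erase hl) (ne_of_mem_erase hl).symm)
    · refine ih (fun a ha => hx a (mem_of_mem_erase (mem_of_mem_erase ha)))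
        (fun a ha b hb => hΓ a (mem_of_mem_erase (mem_of_mem_erase ha))
          b (mem_of_mem_erase (mem_of_mem_erase hb))) ?_
      rw [card_erase_erase hi hl]
      omega

lemma NtildeOn_pos (hx : ∀ i ∈ A, 1 < x i) (hA : 2 * j + 1 ≤ #A) :
    0 < NtildeOn x j A := by
  induction j generalizing A with
  | zero =>
    rw [NtildeOn_zero]
    exact div_pos (sum_pos (fun i hi => one_pos.trans (hx i hi)) (card_pos.mp (by omega)))
      (by exact_mod_cast (show 0 < #A by omega))
  | succ j ih =>
    refine (mul_pos_iff_of_pos_left (natCast_mul_sub_one_pos (m := #A) (by omega))).mp ?_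
    rw [NtildeOn_succ x (by omega)]
    refine sum_pos (fun i hi => sum_pos (fun l hl => mul_pos ?_ ?_) ?_) (card_pos.mp (by omega))
    · exact sub_pos.mpr (one_lt_mul (hx i hi).le (hx l (mem_of_mem_erase hl)))
    · refine ih (fun a ha => hx a (mem_of_mem_erase (mem_of_mem_erase ha))) ?_
      rw [card_erase_erase hi hl]
      omega
    · exact card_pos.mp (by rw [card_erase_of_mem hi]; omega)

lemma one_le_of_NtildeOn_eq (hA : 2 * j + 3 ≤ #A) (hx : ∀ i ∈ A, 0 < x i)
    (hΓ : ∀ i ∈ A, ∀ l ∈ A, i ≠ l → 1 ≤ x i * x l)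
    (heq : NtildeOn x (j + 1) A = pnormOn x 1 A * LtildeOn x (j + 1) A) :
    ∀ i ∈ A, 1 ≤ x i := by
  intro i₀ hi₀
  by_contra! hlt
  have hbig : ∀ l ∈ A.erase i₀, 1 < x l := fun l hl => by
    nlinarith [hΓ l (mem_of_mem_erase hl) i₀ hi₀ (ne_of_mem_erase hl), hx i₀ hi₀]
  obtain ⟨l₀, hl₀⟩ := card_pos.mp (by rw [card_erase_of_mem hi₀]; omega : 0 < #(A.erase i₀))
  have hterm : ∀ i ∈ A, ∀ l ∈ A.erase i,
      0 ≤ (x i - x l) ^ 2 * NtildeOn x j ((A.erase i).erase l) := fun i hi l hl =>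
    mul_nonneg (sq_nonneg _) (NtildeOn_nonneg x
      (fun a ha => (hx a (mem_of_mem_erase (mem_of_mem_erase ha))).le)
      (fun a ha b hb => hΓ a (mem_of_mem_erase (mem_of_mem_erase ha))
        b (mem_of_mem_erase (mem_of_mem_erase hb)))
      (by rw [card_erase_erase hi hl]; omega))
  have hsum_pos : 0 < ∑ i ∈ A, ∑ l ∈ A.erase i,
      (x i - x l) ^ 2 * NtildeOn x j ((A.erase i).erase l) := by
    refine sum_pos' (fun i hi => sum_nonneg (hterm i hi)) ⟨i₀, hi₀, ?_⟩
    refine sum_pos' (hterm i₀ hi₀) ⟨l₀, hl₀, mul_pos ?_ ?_⟩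
    · nlinarith [hbig l₀ hl₀]
    · exact NtildeOn_pos x (fun a ha => hbig a (mem_of_mem_erase ha))
        (by rw [card_erase_erase hi₀ hl₀]; omega)
  have hsum_zero := sum_sum_sub_sq_mul_NtildeOn x hA
  rw [heq, sub_self, mul_zero] at hsum_zero
  exact (mul_pos (by positivity) hsum_pos).ne' hsum_zero

end

lemma pnorm_eq_pnormOn_univ {m : ℕ} (r : ℕ) (x : Fin m → ℝ) : pnorm r x = pnormOn x r univ := by
  simp [pnorm, pnormOn, esymm, esymmOn]

lemma Ntilde_eq_NtildeOn_univ {m : ℕ} (k : ℕ) (x : Fin m → ℝ) :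
    Ntilde k x = NtildeOn x k univ := by
  rw [NtildeOn, fwdDiff_iter_eq_sum_reflect, Ntilde]
  refine sum_congr rfl fun i hi => ?_
  rw [pnorm_eq_pnormOn_univ, show 2 * k + 1 - 2 * i = 2 * (k - i) + 1 by
    have := mem_range.mp hi; omega]

lemma Ltilde_eq_LtildeOn_univ {m : ℕ} (k : ℕ) (x : Fin m → ℝ) :
    Ltilde k x = LtildeOn x k univ := by
  rw [LtildeOn, fwdDiff_iter_eq_sum_reflect, Ltilde]
  refine sum_congr rfl fun i _ => ?_
  rw [pnorm_eq_pnormOn_univ, Nat.mul_sub]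

theorem hconvex_of_Ntilde_eq_general (n k : ℕ) (hk : 1 ≤ k)
    (hkn : 2 * k + 1 ≤ n - 1) (κ : Fin (n - 1) → ℝ)
    (hΓ : ∀ i j : Fin (n - 1), i ≠ j → 1 ≤ κ i * κ j)
    (hpos : ∀ i, 0 < κ i)
    (heq : Ntilde k κ = pnorm 1 κ * Ltilde k κ) :
    ∀ i, 1 ≤ κ i := by
  obtain ⟨j, rfl⟩ : ∃ j, k = j + 1 := ⟨k - 1, by omega⟩
  rw [Ntilde_eq_NtildeOn_univ, Ltilde_eq_LtildeOn_univ, pnorm_eq_pnormOn_univ] at heq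
  exact fun i => one_le_of_NtildeOn_eq κ (by rw [card_univ, Fintype.card_fin]; omega)
    (fun i _ => hpos i) (fun i _ l _ => hΓ i l) heq i (mem_univ i)

/-- If `κ ∈ Γ` has positive entries and `Ñ_k(κ) = p₁(κ) L̃_k(κ)`, then all entries
are at least `1` (h-convexity). -/
theorem hconvex_of_Ntilde_eq (n k : ℕ) (hn : 3 ≤ n) (hk : 1 ≤ k)
    (hkn : 2 * k + 1 ≤ n - 1) (κ : Fin (n - 1) → ℝ)
    (hΓ : ∀ i j : Fin (n - 1), i ≠ j → 1 ≤ κ i * κ j)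
    (hpos : ∀ i, 0 < κ i)
    (heq : Ntilde k κ = pnorm 1 κ * Ltilde k κ) :
    ∀ i, 1 ≤ κ i :=
  hconvex_of_Ntilde_eq_general n k hk hkn κ hΓ hpos heq
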